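/- Let a₁,b₁,v₁,v₂,v₃ : ℝ → ℝ be smooth functions satisfying System (T), and suppose a₁(t) + b₁(t) = 0 for all t. Then there exists a constant C₁ > 0 such that e^{2(v₁(t)+v₂(t))} = 4e^{2v₃(t)} = C₁ for all t, and v₁ satisfies the single second-order equation v₁'' + 4e^{2v₁} − 8C₁e^{−4v₁} = 0. -/

import Mathlib

/-- System (T). -/
def SystemT (a₁ b₁ v₁ v₂ v₃ : ℝ → ℝ) : Prop :=
  (∀ t, deriv a₁ t = 2 * Real.exp (2 * v₁ t) - 4 * Real.exp (2 * (v₂ t - v₁ t))) ∧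
  (∀ t, deriv b₁ t = -Real.exp (2 * v₁ t) + 4 * Real.exp (2 * (v₂ t - v₁ t))
      - 4 * Real.exp (2 * (v₃ t - v₂ t))) ∧
  (∀ t, deriv v₁ t = -2 * a₁ t) ∧
  (∀ t, deriv v₂ t = -2 * b₁ t) ∧
  (∀ t, deriv v₃ t = 2 * (a₁ t + b₁ t))

theorem statement8 (a₁ b₁ v₁ v₂ v₃ : ℝ → ℝ)
    (ha : ContDiff ℝ (⊤ : ℕ∞) a₁) (hb : ContDiff ℝ (⊤ : ℕ∞) b₁)
    (h1 : ContDiff ℝ (⊤ : ℕ∞) v₁) (h2 : ContDiff ℝ (⊤ : ℕ∞) v₂) (h3 : ContDiff ℝ (⊤ : ℕ∞) v₃)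
    (hT : SystemT a₁ b₁ v₁ v₂ v₃)
    (hab : ∀ t, a₁ t + b₁ t = 0) :
    ∃ C₁ : ℝ, 0 < C₁ ∧
      (∀ t, Real.exp (2 * (v₁ t + v₂ t)) = C₁) ∧
      (∀ t, 4 * Real.exp (2 * v₃ t) = C₁) ∧
      (∀ t, deriv (deriv v₁) t + 4 * Real.exp (2 * v₁ t)
          - 8 * C₁ * Real.exp (-4 * v₁ t) = 0) := by
  obtain ⟨hA, hB, hV1, hV2, hV3⟩ := hT
  have hda : Differentiable ℝ a₁ := ha.differentiable (by simp)
  have hdb : Differentiable ℝ b₁ := hb.differentiable (by simp)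
  have hd1 : Differentiable ℝ v₁ := h1.differentiable (by simp)
  have hd2 : Differentiable ℝ v₂ := h2.differentiable (by simp)
  -- v₁ + v₂ is constant
  have hsum : ∀ t, v₁ t + v₂ t = v₁ 0 + v₂ 0 := by
    have hz : ∀ t, deriv (fun t => v₁ t + v₂ t) t = 0 := by
      intro t
      rw [deriv_fun_add (hd1 t) (hd2 t), hV1, hV2]
      have := hab t; linarith
    intro t
    exact is_const_of_deriv_eq_zero (hd1.add hd2) hz t 0
  -- derivative of a₁ + b₁ is zero, since a₁ + b₁ ≡ 0
  have habz : (fun t => a₁ t + b₁ t) = fun _ => (0 : ℝ) := funext hab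
  have hkey : ∀ t, Real.exp (2 * v₁ t) = 4 * Real.exp (2 * (v₃ t - v₂ t)) := by
    intro t
    have hz : deriv (fun t => a₁ t + b₁ t) t = 0 := by rw [habz]; simp
    rw [deriv_fun_add (hda t) (hdb t), hA, hB] at hz
    linarith
  refine ⟨Real.exp (2 * (v₁ 0 + v₂ 0)), Real.exp_pos _, ?_, ?_, ?_⟩
  · intro t; rw [hsum t]
  · intro t
    rw [← hsum t, show 2 * (v₁ t + v₂ t) = 2 * v₁ t + 2 * v₂ t by ring, Real.exp_add,
      hkey t, mul_assoc, ← Real.exp_add]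
    ring_nf
  · intro t
    have hCe : Real.exp (2 * (v₂ t - v₁ t))
        = Real.exp (2 * (v₁ 0 + v₂ 0)) * Real.exp (-4 * v₁ t) := by
      rw [← Real.exp_add, ← hsum t]; ring_nf
    have hder : deriv (deriv v₁) t = -2 * deriv a₁ t := by
      have : deriv v₁ = fun t => -2 * a₁ t := funext hV1
      rw [this, deriv_const_mul _ (hda t)]
    rw [hder, hA t]
    nlinarith [hCe]
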